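/- arXiv:2604.12488 — 4 statements merged into one kernel-verified Lean document; each statement's English description precedes it below -/
import Mathlib

section
/- Let G be an edge-weighted simple graph with weight function w: E(G) → Z_{>0}, edge ideal I(G_w) = ((x_i x_j)^{w(x_i x_j)} : x_i x_j ∈ E(G)) in S = K[x_1,...,x_n]. Suppose e = x_{n-1} x_n is a leaf edge of G (x_n has unique neighbor x_{n-1}) and w(e) ≤ w(x_{n-1} x_j) for all x_j ∈ N_G(x_{n-1}). Then for all t ≥ 2, the colon ideal (I(G_w)^t : (x_{n-1} x_n)^{w(e)}) equals I(G_w)^{t-1}. -/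
/-- The edge ideal of an edge-weighted simple graph: generated by
`(x_i x_j)^(w {i,j})` over all edges `{i, j}` of `G`. -/
noncomputable def edgeIdeal (K : Type*) [Field K] {V : Type*} (G : SimpleGraph V)
    (w : Sym2 V → ℕ) : Ideal (MvPolynomial V K) :=
  Ideal.span {p | ∃ i j, G.Adj i j ∧ p = (MvPolynomial.X i * MvPolynomial.X j) ^ w s(i, j)}

/-!
Both ideals are monomial ideals, and `I^t` is generated by the monomials `x^D` where `D` is a
sum of `t` edge exponent vectors `w(ij)(e_i + e_j)`. So `x^d` lies in the colon ideal iff some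
such `D` satisfies `D ≤ d + γ`, with `γ = w(e)(e_u + e_v)`, and it suffices to drop one summand
`a` of `D` with `D ≤ d + a`. If `γ` itself is a summand, drop it. Otherwise no summand meets the
leaf `v`; if some summand meets `u`, its `u`-entry is at least `w(e)` by minimality of `w(e)`, so
it can be dropped; and if none does, `D ≤ d` already.
-/

open MvPolynomial Pointwise

theorem Set.mem_nsmul_iff_exists_multiset {M : Type*} [AddCommMonoid M] {S : Set M} {n : ℕ}
    {x : M} :
    x ∈ n • S ↔
      ∃ m : Multiset M, Multiset.card m = n ∧ (∀ a ∈ m, a ∈ S) ∧ m.sum = x := by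
  induction n generalizing x with
  | zero => simp [eq_comm]
  | succ n ih =>
    rw [succ_nsmul', Set.mem_add]
    constructor
    · rintro ⟨a, ha, y, hy, rfl⟩
      obtain ⟨m, hcard, hmS, rfl⟩ := ih.mp hy
      refine ⟨a ::ₘ m, by simp [hcard], ?_, by simp⟩
      simpa [forall_eq_or_imp] using ⟨ha, hmS⟩
    · rintro ⟨m, hcard, hmS, rfl⟩
      obtain ⟨a, ha⟩ := Multiset.card_pos_iff_exists_mem.mp (by omega : 0 < Multiset.card m)
      obtain ⟨m', rfl⟩ := Multiset.exists_cons_of_mem ha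
      refine ⟨a, hmS a ha, m'.sum, ih.mpr ⟨m', by simpa using hcard,
        fun b hb => hmS b (Multiset.mem_cons_of_mem hb), rfl⟩, by simp⟩

section MonomialIdeal

variable {σ R : Type*} [CommSemiring R]

theorem MvPolynomial.X_mul_X_pow (i j : σ) (n : ℕ) :
    (X i * X j : MvPolynomial σ R) ^ n = monomial (Finsupp.single i n + Finsupp.single j n) 1 := by
  rw [mul_pow, X_pow_eq_monomial, X_pow_eq_monomial, monomial_mul, one_mul]

theorem MvPolynomial.span_monomial_pow (S : Set (σ →₀ ℕ)) (n : ℕ) :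
    Ideal.span ((monomial · (1 : R)) '' S) ^ n =
      Ideal.span ((monomial · (1 : R)) '' (n • S)) := by
  induction n with
  | zero => simp [Ideal.one_eq_top, monomial_zero']
  | succ n ih =>
    rw [pow_succ, ih, Ideal.span_mul_span', succ_nsmul, ← Set.image2_add, Set.image_image2,
      ← Set.image2_mul, Set.image2_image_left, Set.image2_image_right]
    simp only [monomial_mul, one_mul]

theorem MvPolynomial.colon_span_monomial_le {S T : Set (σ →₀ ℕ)} {γ : σ →₀ ℕ}
    (h : ∀ d, (∃ D ∈ S, D ≤ d + γ) → ∃ D ∈ T, D ≤ d) :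
    (Ideal.span ((monomial · (1 : R)) '' S)).colon
        ((Ideal.span {monomial γ 1} : Ideal (MvPolynomial σ R)) : Set (MvPolynomial σ R))
      ≤ Ideal.span ((monomial · (1 : R)) '' T) := by
  intro p hp
  rw [Ideal.mem_colon_span_singleton, mem_ideal_span_monomial_image] at hp
  rw [mem_ideal_span_monomial_image]
  intro d hd
  apply h
  apply hp
  rw [mem_support_iff, coeff_mul_monomial, mul_one]
  exact mem_support_iff.mp hd

end MonomialIdeal

section EdgeIdeal

variable {V : Type*} (G : SimpleGraph V) (w : Sym2 V → ℕ)

def edgeExponents : Set (V →₀ ℕ) :=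
  {a | ∃ i j, G.Adj i j ∧ a = Finsupp.single i (w s(i, j)) + Finsupp.single j (w s(i, j))}

theorem edgeIdeal_eq_span_monomial (K : Type*) [Field K] :
    edgeIdeal K G w = Ideal.span ((monomial · (1 : K)) '' edgeExponents G w) := by
  unfold edgeIdeal edgeExponents
  congr 1
  ext p
  simp [X_mul_X_pow, eq_comm]

variable {G w} {u v : V}

theorem adj_of_neighborSet_eq_singleton (hleaf : G.neighborSet v = {u}) : G.Adj v u := by
  rw [← G.mem_neighborSet, hleaf]
  rfl

theorem eq_of_mem_edgeExponents_of_leaf_ne_zero (hleaf : G.neighborSet v = {u}) {a : V →₀ ℕ}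
    (ha : a ∈ edgeExponents G w) (hav : a v ≠ 0) :
    a = Finsupp.single u (w s(u, v)) + Finsupp.single v (w s(u, v)) := by
  obtain ⟨i, j, hij, rfl⟩ := ha
  have hnbr : ∀ x, G.Adj v x → x = u := fun x hx => by
    simpa [hleaf] using (G.mem_neighborSet v x).mpr hx
  rcases eq_or_ne i v with rfl | hiv
  · rw [hnbr j hij, Sym2.eq_swap, add_comm]
  rcases eq_or_ne j v with rfl | hjv
  · rw [hnbr i hij.symm]
  simp [Finsupp.single_eq_of_ne' hiv, Finsupp.single_eq_of_ne' hjv] at hav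

theorem le_apply_of_mem_edgeExponents (hmin : ∀ j, G.Adj u j → w s(u, v) ≤ w s(u, j))
    {a : V →₀ ℕ} (ha : a ∈ edgeExponents G w) (hau : a u ≠ 0) : w s(u, v) ≤ a u := by
  obtain ⟨i, j, hij, rfl⟩ := ha
  rcases eq_or_ne i u with rfl | hiu
  · exact (hmin j hij).trans (by simp)
  rcases eq_or_ne j u with rfl | hju
  · refine (hmin i hij.symm).trans ?_
    rw [Sym2.eq_swap]
    simp
  simp [Finsupp.single_eq_of_ne' hiu, Finsupp.single_eq_of_ne' hju] at hau

theorem exists_mem_sum_le_add_of_sum_le_add (hleaf : G.neighborSet v = {u})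
    (hmin : ∀ j, G.Adj u j → w s(u, v) ≤ w s(u, j)) {m : Multiset (V →₀ ℕ)}
    (hm : ∀ a ∈ m, a ∈ edgeExponents G w) (hm0 : m ≠ 0) {d : V →₀ ℕ}
    (hle : m.sum ≤ d + (Finsupp.single u (w s(u, v)) + Finsupp.single v (w s(u, v)))) :
    ∃ a ∈ m, m.sum ≤ d + a := by
  set γ := Finsupp.single u (w s(u, v)) + Finsupp.single v (w s(u, v))
  by_cases hγ : γ ∈ m
  · exact ⟨γ, hγ, hle⟩
  have hsum_v : m.sum v = 0 := by
    by_contra h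
    obtain ⟨a, ham, hav⟩ := Finsupp.mem_support_multiset_sum v (Finsupp.mem_support_iff.mpr h)
    rw [eq_of_mem_edgeExponents_of_leaf_ne_zero hleaf (hm a ham)
      (Finsupp.mem_support_iff.mp hav)] at ham
    exact hγ ham
  have huv : u ≠ v := (adj_of_neighborSet_eq_singleton hleaf).ne'
  suffices ∃ a ∈ m, m.sum u ≤ d u + a u by
    obtain ⟨a, ham, hu⟩ := this
    refine ⟨a, ham, fun x => ?_⟩
    rcases eq_or_ne x u with rfl | hxu
    · exact hu
    rcases eq_or_ne x v with rfl | hxv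
    · simp [hsum_v]
    have hγx : γ x = 0 := by
      simp [γ, Finsupp.single_eq_of_ne' hxu.symm, Finsupp.single_eq_of_ne' hxv.symm]
    exact (hle x).trans (by simp [hγx])
  by_cases hsum_u : m.sum u = 0
  · obtain ⟨a, ham⟩ := Multiset.exists_mem_of_ne_zero hm0
    exact ⟨a, ham, by simp [hsum_u]⟩
  · obtain ⟨a, ham, hau⟩ :=
      Finsupp.mem_support_multiset_sum u (Finsupp.mem_support_iff.mpr hsum_u)
    refine ⟨a, ham, (hle u).trans ?_⟩
    simpa [γ, Finsupp.single_eq_of_ne' huv.symm] using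
      le_apply_of_mem_edgeExponents hmin (hm a ham) (Finsupp.mem_support_iff.mp hau)

theorem exists_mem_nsmul_le_of_le_add (hleaf : G.neighborSet v = {u})
    (hmin : ∀ j, G.Adj u j → w s(u, v) ≤ w s(u, j)) {n : ℕ} {D d : V →₀ ℕ}
    (hD : D ∈ (n + 1) • edgeExponents G w)
    (hle : D ≤ d + (Finsupp.single u (w s(u, v)) + Finsupp.single v (w s(u, v)))) :
    ∃ D' ∈ n • edgeExponents G w, D' ≤ d := by
  obtain ⟨m, hcard, hm, rfl⟩ := Set.mem_nsmul_iff_exists_multiset.mp hD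
  obtain ⟨a, ham, hsum⟩ := exists_mem_sum_le_add_of_sum_le_add hleaf hmin hm
    (Multiset.card_pos.mp (by omega)) hle
  obtain ⟨m', rfl⟩ := Multiset.exists_cons_of_mem ham
  refine ⟨m'.sum, Set.mem_nsmul_iff_exists_multiset.mpr
    ⟨m', by simpa using hcard, fun b hb => hm b (Multiset.mem_cons_of_mem hb), rfl⟩, ?_⟩
  rw [Multiset.sum_cons, add_comm d] at hsum
  exact le_of_add_le_add_left hsum

end EdgeIdeal

theorem colon_leaf_edge_general {K : Type*} [Field K] {V : Type*} (G : SimpleGraph V)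
    (w : Sym2 V → ℕ)
    (u v : V) (hleaf : G.neighborSet v = {u})
    (hmin : ∀ j, G.Adj u j → w s(u, v) ≤ w s(u, j)) :
    ∀ t, 2 ≤ t →
      (edgeIdeal K G w ^ t).colon
          ((Ideal.span {(MvPolynomial.X u * MvPolynomial.X v) ^ w s(u, v)} : Ideal (MvPolynomial V K)) : Set (MvPolynomial V K))
        = edgeIdeal K G w ^ (t - 1) := by
  intro t ht
  obtain ⟨n, rfl⟩ : ∃ n, t = n + 1 := ⟨t - 1, by omega⟩
  rw [Nat.add_sub_cancel]
  apply le_antisymm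
  · rw [edgeIdeal_eq_span_monomial, span_monomial_pow, span_monomial_pow, X_mul_X_pow]
    exact colon_span_monomial_le fun d ⟨D, hD, hle⟩ =>
      exists_mem_nsmul_le_of_le_add hleaf hmin hD hle
  · intro p hp
    rw [Ideal.mem_colon_span_singleton, pow_succ]
    exact Ideal.mul_mem_mul hp
      (Ideal.subset_span ⟨u, v, (adj_of_neighborSet_eq_singleton hleaf).symm, rfl⟩)

theorem colon_leaf_edge {K : Type*} [Field K] {V : Type*} (G : SimpleGraph V)
    (w : Sym2 V → ℕ) (hw : ∀ e ∈ G.edgeSet, 1 ≤ w e)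
    (u v : V) (hleaf : G.neighborSet v = {u})
    (hmin : ∀ j, G.Adj u j → w s(u, v) ≤ w s(u, j)) :
    ∀ t, 2 ≤ t →
      (edgeIdeal K G w ^ t).colon
          ((Ideal.span {(MvPolynomial.X u * MvPolynomial.X v) ^ w s(u, v)} : Ideal (MvPolynomial V K)) : Set (MvPolynomial V K))
        = edgeIdeal K G w ^ (t - 1) :=
  colon_leaf_edge_general G w u v hleaf hmin
end

section
/- Let Δ ⊆ [n] be a nonempty finite set of positive integers and Γ_1 = Δ \ {min(Δ)}. Define a(Δ), b(Δ), c(Δ), k(Δ) and the piecewise function d(Δ,t) as in the context. Then for all t ≥ 1, d(Δ,t) ≤ min{d(Γ_1, t−1), d(Γ_1, t) + 1}. -/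
/-- Group a sorted list of naturals into maximal runs of consecutive integers
(the maximal block decomposition). -/
def runs : List ℕ → List (List ℕ)
  | [] => []
  | x :: xs =>
    match runs xs with
    | (y :: ys) :: rest => if x + 1 = y then (x :: y :: ys) :: rest else [x] :: (y :: ys) :: rest
    | l => [x] :: l

/-- For each maximal block, record (min, max, cardinality mod 3). -/
def blockData (l : List ℕ) : List (ℕ × ℕ × ℕ) :=
  (runs l).map (fun b => (b.headI, (b.getLast?).getD 0, b.length % 3))

/-- Fold over the list of blocks, grouping consecutive gluable type-1/type-2 blocks into
maximal extended blocks; the state `(t, s)` counts type-1/type-2 blocks of the current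
extended block and `prev` records the max of the previous block if it can be glued onto.
Each finished extended block with `t` type-1 and `s` type-2 blocks contributes
`t % 2` to `a` and `s + (t - t % 2) / 2` to `b`; the result is `(a, b)`. -/
def go : List (ℕ × ℕ × ℕ) → ℕ → ℕ → Option ℕ → ℕ × ℕ
  | [], t, s, _ => (t % 2, s + (t - t % 2) / 2)
  | (m, mx, ty) :: rest, t, s, prev =>
    if ty = 0 then
      let r := go rest 0 0 none
      (r.1 + t % 2, r.2 + s + (t - t % 2) / 2)
    else if prev = some (m - 2) ∧ 2 ≤ m then
      go rest (t + if ty = 1 then 1 else 0) (s + if ty = 2 then 1 else 0) (some mx)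
    else
      let r := go rest (if ty = 1 then 1 else 0) (if ty = 2 then 1 else 0) (some mx)
      (r.1 + t % 2, r.2 + s + (t - t % 2) / 2)

/-- The invariant `a(Δ)`. -/
def aF (Δ : Finset ℕ) : ℕ := (go (blockData (Δ.sort (· ≤ ·))) 0 0 none).1

/-- The invariant `b(Δ)`. -/
def bF (Δ : Finset ℕ) : ℕ := (go (blockData (Δ.sort (· ≤ ·))) 0 0 none).2

/-- The invariant `c(Δ) = (|Δ| - a(Δ) - 2 b(Δ)) / 3`. -/
def cF (Δ : Finset ℕ) : ℕ := (Δ.card - aF Δ - 2 * bF Δ) / 3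

/-- The invariant `k(Δ) = a(Δ) + b(Δ) + c(Δ)`. -/
def kF (Δ : Finset ℕ) : ℕ := aF Δ + bF Δ + cF Δ

/-- The piecewise function `d(Δ, t)` of the paper. -/
def dF (Δ : Finset ℕ) (t : ℕ) : ℕ :=
  if t ≤ aF Δ then kF Δ + 2 - t
  else if t ≤ aF Δ + 2 * bF Δ then kF Δ + 1 - (t + aF Δ - 1) / 2
  else if t ≤ Δ.card then kF Δ + 1 - (t + 2 * aF Δ + bF Δ - 1) / 3
  else 1

lemma go_state (bs : List (ℕ×ℕ×ℕ)) : ∀ t s p, go bs t s p =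
    ((go bs (t % 2) 0 p).1, (go bs (t % 2) 0 p).2 + s + t / 2) := by
  induction bs with
  | nil =>
    intro t s p; simp only [go, Prod.mk.injEq]; omega
  | cons hd tl ih =>
    obtain ⟨m, mx, ty⟩ := hd
    intro t s p
    by_cases h0 : ty = 0
    · simp only [go, h0, if_pos rfl, if_true, Prod.mk.injEq]
      constructor <;> omega
    · by_cases hg : p = some (m - 2) ∧ 2 ≤ m
      · simp only [go, if_neg h0, if_pos hg]
        by_cases h1 : ty = 1
        · simp only [h1, if_pos rfl, if_true]
          rw [ih (t + 1), ih (t % 2 + 1)]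
          have h2 : (1:ℕ) ≠ 2 := by omega
          simp only [if_neg h2, Prod.mk.injEq]
          constructor
          · congr 2; omega
          · have h3 : (t + 1) % 2 = (t % 2 + 1) % 2 := by omega
            rw [h3]; omega
        · simp only [if_neg h1]
          rw [ih (t + 0), ih (t % 2 + 0)]
          simp only [Prod.mk.injEq]
          constructor
          · congr 2; omega
          · have h3 : (t + 0) % 2 = (t % 2 + 0) % 2 := by omega
            rw [h3]; omega
      · simp only [go, if_neg h0, if_neg hg, Prod.mk.injEq]
        constructor <;> omega

lemma go_succ (bs : List (ℕ×ℕ×ℕ)) : ∀ t s p,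
    ((go bs (t+1) s p).1 = (go bs t s p).1 + 1 ∧ (go bs (t+1) s p).2 = (go bs t s p).2) ∨
    ((go bs (t+1) s p).1 + 1 = (go bs t s p).1 ∧ (go bs (t+1) s p).2 = (go bs t s p).2 + 1) := by
  induction bs with
  | nil => intro t s p; simp only [go]; omega
  | cons hd tl ih =>
    obtain ⟨m, mx, ty⟩ := hd
    intro t s p
    by_cases h0 : ty = 0
    · simp only [go, h0, if_pos rfl, if_true]; omega
    · by_cases hg : p = some (m - 2) ∧ 2 ≤ m
      · simp only [go, if_neg h0, if_pos hg]
        have := ih (t + if ty = 1 then 1 else 0) (s + if ty = 2 then 1 else 0) (some mx)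
        have harr : t + 1 + (if ty = 1 then 1 else 0) = t + (if ty = 1 then 1 else 0) + 1 := by
          omega
        rw [harr]; exact this
      · simp only [go, if_neg h0, if_neg hg]; omega

lemma go_prev (bs : List (ℕ×ℕ×ℕ)) (p p' : Option ℕ) : go bs 0 0 p = go bs 0 0 p' := by
  cases bs with
  | nil => rfl
  | cons hd tl =>
    obtain ⟨m, mx, ty⟩ := hd
    by_cases h0 : ty = 0
    · simp [go, h0]
    · have key : ∀ q, go ((m,mx,ty)::tl) 0 0 q
          = go tl (if ty = 1 then 1 else 0) (if ty = 2 then 1 else 0) (some mx) := by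
        intro q
        by_cases hg : q = some (m-2) ∧ 2 ≤ m <;> simp [go, h0, hg]
      rw [key, key]

lemma go_start1 (bs : List (ℕ×ℕ×ℕ)) (p : Option ℕ) :
    ((go bs 1 0 p).1 = (go bs 0 0 none).1 + 1 ∧ (go bs 1 0 p).2 = (go bs 0 0 none).2) ∨
    ((go bs 1 0 p).1 + 1 = (go bs 0 0 none).1 ∧ (go bs 1 0 p).2 = (go bs 0 0 none).2 + 1) := by
  cases bs with
  | nil => left; simp [go]
  | cons hd tl =>
    obtain ⟨m, mx, ty⟩ := hd
    by_cases h0 : ty = 0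
    · simp [go, h0]
    · by_cases hg : p = some (m-2) ∧ 2 ≤ m
      · have hq : ¬((none : Option ℕ) = some (m-2) ∧ 2 ≤ m) := by simp
        simp only [go, if_neg h0, if_pos hg, if_neg hq]
        have := go_succ tl (if ty = 1 then 1 else 0) (if ty = 2 then 1 else 0) (some mx)
        have h1 : 1 + (if ty = 1 then 1 else 0) = (if ty = 1 then 1 else 0) + 1 := by omega
        have h2 : 0 + (if ty = 2 then 1 else 0) = (if ty = 2 then 1 else 0) := by omega
        rw [h1, h2]
        simpa using this
      · have hq : ¬((none : Option ℕ) = some (m-2) ∧ 2 ≤ m) := by simp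
        simp only [go, if_neg h0, if_pos, if_neg hg, if_neg hq]
        simp

lemma runs_cons (y : ℕ) (ys : List ℕ) : ∃ r rest, runs (y :: ys) = (y :: r) :: rest := by
  rcases h : runs ys with _ | ⟨a, rest⟩
  · exact ⟨[], [], by simp [runs, h]⟩
  · rcases a with _ | ⟨z, zs⟩
    · exact ⟨[], [] :: rest, by simp [runs, h]⟩
    · by_cases hz : y + 1 = z
      · exact ⟨z :: zs, rest, by simp [runs, h, hz]⟩
      · exact ⟨[], (z :: zs) :: rest, by simp [runs, h, hz]⟩

lemma go_head_0 (m mx : ℕ) (tl : List (ℕ×ℕ×ℕ)) :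
    go ((m,mx,0)::tl) 0 0 none = go tl 0 0 none := by
  simp [go]

lemma go_head_ne (m mx ty : ℕ) (tl : List (ℕ×ℕ×ℕ)) (h0 : ty ≠ 0) :
    go ((m,mx,ty)::tl) 0 0 none
      = go tl (if ty = 1 then 1 else 0) (if ty = 2 then 1 else 0) (some mx) := by
  simp [go, h0]

lemma struct (x : ℕ) (xs : List ℕ) :
    ((go (blockData (x::xs)) 0 0 none).1 = (go (blockData xs) 0 0 none).1 + 1 ∧
       (go (blockData (x::xs)) 0 0 none).2 = (go (blockData xs) 0 0 none).2) ∨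
    ((go (blockData (x::xs)) 0 0 none).1 + 1 = (go (blockData xs) 0 0 none).1 ∧
       (go (blockData (x::xs)) 0 0 none).2 = (go (blockData xs) 0 0 none).2 + 1) ∨
    ((go (blockData (x::xs)) 0 0 none).1 = (go (blockData xs) 0 0 none).1 ∧
       (go (blockData (x::xs)) 0 0 none).2 + 1 = (go (blockData xs) 0 0 none).2) := by
  cases xs with
  | nil =>
    left
    simp [blockData, runs, go]
  | cons y ys =>
    obtain ⟨r, rest, hr⟩ := runs_cons y ys
    have hbdQ : blockData (y::ys)
        = (y, ((y::r).getLast?).getD 0, (r.length+1)%3)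
            :: rest.map (fun b => (b.headI, (b.getLast?).getD 0, b.length % 3)) := by
      simp [blockData, hr]
    by_cases hxy : x + 1 = y
    · have hruns : runs (x::y::ys) = (x::y::r)::rest := by
        rw [runs]; rw [hr]; simp [hxy]
      have hbdP : blockData (x::y::ys)
          = (x, ((y::r).getLast?).getD 0, (r.length+2)%3)
              :: rest.map (fun b => (b.headI, (b.getLast?).getD 0, b.length % 3)) := by
        unfold blockData
        rw [hruns]
        simp [List.getLast?_cons_cons]
      set M := ((y::r).getLast?).getD 0 with hM
      set T := rest.map (fun b => (b.headI, (b.getLast?).getD 0, b.length % 3)) with hT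
      rw [hbdP, hbdQ]
      have h3 : ((r.length+1)%3 = 0 ∧ (r.length+2)%3 = 1)
          ∨ ((r.length+1)%3 = 1 ∧ (r.length+2)%3 = 2)
          ∨ ((r.length+1)%3 = 2 ∧ (r.length+2)%3 = 0) := by omega
      rcases h3 with ⟨he, he'⟩ | ⟨he, he'⟩ | ⟨he, he'⟩ <;> rw [he, he']
      · rw [go_head_0, go_head_ne x M 1 T one_ne_zero]
        norm_num
        rcases go_start1 T (some M) with h | h
        · exact Or.inl h
        · exact Or.inr (Or.inl h)
      · rw [go_head_ne x M 2 T two_ne_zero, go_head_ne y M 1 T one_ne_zero]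
        norm_num
        have hP := go_state T 0 1 (some M)
        norm_num at hP
        rw [hP]
        have hs := go_succ T 0 0 (some M)
        norm_num at hs
        rcases hs with ⟨h1, h2⟩ | ⟨h1, h2⟩
        · right; left; constructor <;> simp <;> omega
        · left; constructor <;> simp <;> omega
      · rw [go_head_0, go_head_ne y M 2 T two_ne_zero]
        norm_num
        have hQ := go_state T 0 1 (some M)
        norm_num at hQ
        rw [hQ]
        rw [go_prev T none (some M)]
        right; right; constructor <;> simp
    · have hruns : runs (x::y::ys) = [x]::(y::r)::rest := by
        rw [runs]
        rw [hr]
        simp [hxy]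
      have hbdP : blockData (x::y::ys) = (x,x,1) :: blockData (y::ys) := by
        unfold blockData
        rw [hruns, hr]
        simp
      rw [hbdP]
      have hstep : go ((x,x,1)::blockData (y::ys)) 0 0 none
          = go (blockData (y::ys)) 1 0 (some x) := by
        simpa using go_head_ne x x 1 (blockData (y::ys)) one_ne_zero
      rw [hstep]
      rcases go_start1 (blockData (y::ys)) (some x) with h | h
      · exact Or.inl h
      · exact Or.inr (Or.inl h)

lemma inv_list (l : List ℕ) :
    (go (blockData l) 0 0 none).1 + 2 * (go (blockData l) 0 0 none).2 ≤ l.length ∧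
    l.length % 3
      = ((go (blockData l) 0 0 none).1 + 2 * (go (blockData l) 0 0 none).2) % 3 := by
  induction l with
  | nil => simp [blockData, runs, go]
  | cons x xs ih =>
    have h := struct x xs
    simp only [List.length_cons]
    omega

set_option maxHeartbeats 1000000 in
lemma arith (A B A' B' N t : ℕ) (ht : 1 ≤ t)
    (hiv1 : A + 2*B ≤ N + 1) (hiv2 : (N+1) % 3 = (A + 2*B) % 3)
    (hiv1' : A' + 2*B' ≤ N) (hiv2' : N % 3 = (A' + 2*B') % 3)
    (hst : (A = A' + 1 ∧ B = B') ∨ (A + 1 = A' ∧ B = B' + 1) ∨ (A = A' ∧ B + 1 = B')) :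
    (if t ≤ A then A + B + (N + 1 - A - 2*B)/3 + 2 - t
     else if t ≤ A + 2*B then A + B + (N + 1 - A - 2*B)/3 + 1 - (t + A - 1)/2
     else if t ≤ N + 1 then A + B + (N + 1 - A - 2*B)/3 + 1 - (t + 2*A + B - 1)/3
     else 1) ≤
    min
    (if t - 1 ≤ A' then A' + B' + (N - A' - 2*B')/3 + 2 - (t-1)
     else if t - 1 ≤ A' + 2*B' then A' + B' + (N - A' - 2*B')/3 + 1 - (t - 1 + A' - 1)/2
     else if t - 1 ≤ N then A' + B' + (N - A' - 2*B')/3 + 1 - (t - 1 + 2*A' + B' - 1)/3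
     else 1)
    ((if t ≤ A' then A' + B' + (N - A' - 2*B')/3 + 2 - t
     else if t ≤ A' + 2*B' then A' + B' + (N - A' - 2*B')/3 + 1 - (t + A' - 1)/2
     else if t ≤ N then A' + B' + (N - A' - 2*B')/3 + 1 - (t + 2*A' + B' - 1)/3
     else 1) + 1) := by
  rcases hst with ⟨h1, h2⟩ | ⟨h1, h2⟩ | ⟨h1, h2⟩ <;>
    refine le_min ?_ ?_ <;> split_ifs <;> omega

theorem d_remove_min {n : ℕ} (Δ : Finset ℕ) (hsub : Δ ⊆ Finset.Icc 1 n)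
    (hne : Δ.Nonempty) :
    ∀ t, 1 ≤ t →
      dF Δ t ≤ min (dF (Δ.erase (Δ.min' hne)) (t - 1)) (dF (Δ.erase (Δ.min' hne)) t + 1) := by
  set m := Δ.min' hne with hm
  set Γ := Δ.erase m with hΓ
  have hmem : m ∈ Δ := Δ.min'_mem hne
  have hsort : Δ.sort (· ≤ ·) = m :: (Γ.sort (· ≤ ·)) := by
    conv_lhs => rw [← Finset.insert_erase hmem]
    rw [Finset.sort_insert]
    · intro b hb
      exact Δ.min'_le b (Finset.mem_of_mem_erase hb)
    · exact Finset.notMem_erase m Δ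
  have hcard : Δ.card = Γ.card + 1 := by
    have h1 : Γ.card = Δ.card - 1 := Finset.card_erase_of_mem hmem
    have h2 : 1 ≤ Δ.card := Finset.card_pos.mpr hne
    omega
  have hst : (aF Δ = aF Γ + 1 ∧ bF Δ = bF Γ) ∨
      (aF Δ + 1 = aF Γ ∧ bF Δ = bF Γ + 1) ∨
      (aF Δ = aF Γ ∧ bF Δ + 1 = bF Γ) := by
    have h := struct m (Γ.sort (· ≤ ·))
    rw [← hsort] at h
    exact h
  have hiv : aF Δ + 2 * bF Δ ≤ Δ.card ∧ Δ.card % 3 = (aF Δ + 2 * bF Δ) % 3 := by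
    have h := inv_list (Δ.sort (· ≤ ·))
    rwa [Finset.length_sort] at h
  have hiv' : aF Γ + 2 * bF Γ ≤ Γ.card ∧ Γ.card % 3 = (aF Γ + 2 * bF Γ) % 3 := by
    have h := inv_list (Γ.sort (· ≤ ·))
    rwa [Finset.length_sort] at h
  intro t ht
  obtain ⟨hiv1, hiv2⟩ := hiv
  obtain ⟨hiv1', hiv2'⟩ := hiv'
  rw [hcard] at hiv1 hiv2
  simp only [dF, kF, cF]
  rw [hcard]
  exact arith (aF Δ) (bF Δ) (aF Γ) (bF Γ) (Γ.card) t ht hiv1 hiv2 hiv1' hiv2' hst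
end

section
/- Let Δ ⊆ [n] be a set of positive integers with 1 ∈ Δ, and Γ_2 = Δ ∩ [3,n]. With a(Δ), b(Δ), c(Δ), k(Δ), and d(Δ,t) defined as in the context, for all t ≥ 1 we have d(Δ,t) ≤ d(Γ_2, t) + 1. -/
/-- Distance at most one in the hexagonal lattice: `x - y ∈ {0, ±(1, 0), ±(0, 1), ±(1, -1)}`. -/
def HexClose (x y : ℕ × ℕ) : Prop :=
  x.1 ≤ y.1 + 1 ∧ y.1 ≤ x.1 + 1 ∧ x.2 ≤ y.2 + 1 ∧ y.2 ≤ x.2 + 1 ∧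
    x.1 + x.2 ≤ y.1 + y.2 + 1 ∧ y.1 + y.2 ≤ x.1 + x.2 + 1

lemma go_zero_zero_prev (l : List (ℕ × ℕ × ℕ)) (p q : Option ℕ) : go l 0 0 p = go l 0 0 q := by
  cases l with
  | nil => rfl
  | cons hd rest =>
    obtain ⟨m, mx, ty⟩ := hd
    simp only [go]
    split_ifs <;> simp

lemma go_s_succ (l : List (ℕ × ℕ × ℕ)) (t s : ℕ) (p : Option ℕ) :
    go l t (s + 1) p = ((go l t s p).1, (go l t s p).2 + 1) := by
  induction l generalizing t s p with
  | nil => simp only [go, Prod.mk.injEq, true_and]; omega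
  | cons hd rest ih =>
    obtain ⟨m, mx, ty⟩ := hd
    simp only [go]
    generalize (if ty = 1 then 1 else 0) = i₁
    generalize (if ty = 2 then 1 else 0) = i₂
    split_ifs
    · simp only [Prod.mk.injEq, true_and]; omega
    · rw [show s + 1 + i₂ = s + i₂ + 1 by omega, ih]
    · simp only [Prod.mk.injEq, true_and]; omega

/-- One more type-1 block in the current extended block flips `t % 2`, and when it completes a pair
it trades one unit of `a` for one unit of `b`. -/
lemma go_t_succ (l : List (ℕ × ℕ × ℕ)) (t s : ℕ) (p : Option ℕ) :
    ((go l (t + 1) s p).1 = (go l t s p).1 + 1 ∧ (go l (t + 1) s p).2 = (go l t s p).2) ∨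
    ((go l t s p).1 = (go l (t + 1) s p).1 + 1 ∧ (go l (t + 1) s p).2 = (go l t s p).2 + 1) := by
  induction l generalizing t s p with
  | nil => simp only [go]; omega
  | cons hd rest ih =>
    obtain ⟨m, mx, ty⟩ := hd
    simp only [go]
    generalize (if ty = 1 then 1 else 0) = i₁
    generalize (if ty = 2 then 1 else 0) = i₂
    split_ifs
    · omega
    · rw [show t + 1 + i₁ = t + i₁ + 1 by omega]
      exact ih _ _ _
    · omega

lemma go_cons_start (m mx ty : ℕ) (rest : List (ℕ × ℕ × ℕ)) :
    go ((m, mx, ty) :: rest) 0 0 none =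
      go rest (if ty = 1 then 1 else 0) (if ty = 2 then 1 else 0) (some mx) := by
  simp only [go]
  split_ifs <;> simp_all [go_zero_zero_prev rest none (some mx)]

lemma go_cons_type_zero (m mx : ℕ) (rest : List (ℕ × ℕ × ℕ)) :
    go ((m, mx, 0) :: rest) 0 0 none = go rest 0 0 none := by
  rw [go_cons_start]
  exact go_zero_zero_prev rest _ _

lemma hexClose_go_cons (m m' mx ty ty' : ℕ) (rest : List (ℕ × ℕ × ℕ)) :
    HexClose (go ((m, mx, ty) :: rest) 0 0 none) (go ((m', mx, ty') :: rest) 0 0 none) := by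
  have h2 := go_s_succ rest 0 0 (some mx)
  have h1 := go_t_succ rest 0 0 (some mx)
  rw [go_cons_start, go_cons_start]
  simp only [Prod.ext_iff, Nat.zero_add] at h1 h2
  unfold HexClose
  split_ifs <;> omega

lemma hexClose_go_cons_tail (m mx ty : ℕ) (rest : List (ℕ × ℕ × ℕ)) :
    HexClose (go ((m, mx, ty) :: rest) 0 0 none) (go rest 0 0 none) := by
  simpa only [go_cons_type_zero] using hexClose_go_cons m 0 mx ty 0 rest

lemma runs_cons_eq (x : ℕ) (L : List ℕ) : ∃ B rest, runs (x :: L) = (x :: B) :: rest ∧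
    (B ≠ [] ∧ runs L = B :: rest ∨ B = [] ∧ runs L = rest) := by
  simp only [runs]
  rcases h : runs L with _ | ⟨_ | ⟨y, ys⟩, rest⟩
  · exact ⟨[], [], rfl, Or.inr ⟨rfl, rfl⟩⟩
  · exact ⟨[], _, rfl, Or.inr ⟨rfl, rfl⟩⟩
  · dsimp only
    split_ifs
    · exact ⟨_, _, rfl, Or.inl ⟨List.cons_ne_nil _ _, rfl⟩⟩
    · exact ⟨[], _, rfl, Or.inr ⟨rfl, rfl⟩⟩

lemma hexClose_go_blockData_of_runs {M L P B : List ℕ} {rest : List (List ℕ)}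
    (hM : runs M = (P ++ B) :: rest) (hL : B ≠ [] ∧ runs L = B :: rest ∨ B = [] ∧ runs L = rest) :
    HexClose (go (blockData M) 0 0 none) (go (blockData L) 0 0 none) := by
  rcases hL with ⟨hB, hL⟩ | ⟨rfl, hL⟩
  · simp only [blockData, hM, hL, List.map_cons, List.getLast?_append_of_ne_nil _ hB]
    exact hexClose_go_cons ..
  · simp only [blockData, hM, hL, List.map_cons]
    exact hexClose_go_cons_tail ..

lemma hexClose_go_blockData_cons (x : ℕ) (L : List ℕ) :
    HexClose (go (blockData (x :: L)) 0 0 none) (go (blockData L) 0 0 none) := by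
  obtain ⟨B, rest, h, hL⟩ := runs_cons_eq x L
  exact hexClose_go_blockData_of_runs (P := [x]) h hL

lemma hexClose_go_blockData_cons_succ (x : ℕ) (L : List ℕ) :
    HexClose (go (blockData (x :: (x + 1) :: L)) 0 0 none) (go (blockData L) 0 0 none) := by
  obtain ⟨B, rest, h, hL⟩ := runs_cons_eq (x + 1) L
  have hM : runs (x :: (x + 1) :: L) = ([x, x + 1] ++ B) :: rest := by
    rw [runs, h]
    simp
  exact hexClose_go_blockData_of_runs hM hL

lemma flatten_runs (l : List ℕ) : (runs l).flatten = l := by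
  induction l with
  | nil => rfl
  | cons x xs ih =>
    obtain ⟨B, rest, h, hxs⟩ := runs_cons_eq x xs
    rcases hxs with ⟨-, hxs⟩ | ⟨rfl, hxs⟩ <;> rw [h, ← ih, hxs] <;> simp

lemma exists_sum_eq_sum_map_mod_three (ns : List ℕ) :
    ∃ k, ns.sum = (ns.map (· % 3)).sum + 3 * k := by
  induction ns with
  | nil => exact ⟨0, rfl⟩
  | cons n ns ih =>
    obtain ⟨k, hk⟩ := ih
    exact ⟨n / 3 + k, by simp only [List.sum_cons, List.map_cons]; omega⟩

lemma exists_length_eq_sum_blockData (l : List ℕ) :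
    ∃ k, l.length = ((blockData l).map fun x => x.2.2).sum + 3 * k := by
  obtain ⟨k, hk⟩ := exists_sum_eq_sum_map_mod_three ((runs l).map List.length)
  refine ⟨k, ?_⟩
  rw [← flatten_runs l, List.length_flatten, hk, flatten_runs, blockData, List.map_map,
    List.map_map]
  rfl

lemma exists_add_sum_eq_go (l : List (ℕ × ℕ × ℕ)) (hl : ∀ x ∈ l, x.2.2 < 3) (t s : ℕ)
    (p : Option ℕ) :
    ∃ k, t + 2 * s + (l.map fun x => x.2.2).sum = (go l t s p).1 + 2 * (go l t s p).2 + 3 * k := by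
  induction l generalizing t s p with
  | nil => exact ⟨0, by simp only [go, List.map_nil, List.sum_nil]; omega⟩
  | cons hd rest ih =>
    obtain ⟨m, mx, ty⟩ := hd
    have hty : ty < 3 := hl (m, mx, ty) List.mem_cons_self
    have hrest : ∀ x ∈ rest, x.2.2 < 3 := fun x hx => hl x (List.mem_cons_of_mem _ hx)
    have hsplit : (if ty = 1 then 1 else 0) + 2 * (if ty = 2 then 1 else 0) = ty := by
      split_ifs <;> omega
    simp only [go, List.map_cons, List.sum_cons]
    generalize (if ty = 1 then 1 else 0) = i₁ at hsplit ⊢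
    generalize (if ty = 2 then 1 else 0) = i₂ at hsplit ⊢
    split_ifs
    · obtain ⟨k, hk⟩ := ih hrest 0 0 none
      exact ⟨k, by omega⟩
    · obtain ⟨k, hk⟩ := ih hrest (t + i₁) (s + i₂) (some mx)
      exact ⟨k, by omega⟩
    · obtain ⟨k, hk⟩ := ih hrest i₁ i₂ (some mx)
      exact ⟨k, by omega⟩

lemma exists_card_eq (S : Finset ℕ) : ∃ c, S.card = aF S + 2 * bF S + 3 * c := by
  obtain ⟨k₁, h₁⟩ := exists_length_eq_sum_blockData (S.sort (· ≤ ·))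
  obtain ⟨k₂, h₂⟩ := exists_add_sum_eq_go (blockData (S.sort (· ≤ ·)))
    (fun x hx => by
      obtain ⟨B, -, rfl⟩ := List.mem_map.mp hx
      exact Nat.mod_lt _ (by norm_num)) 0 0 none
  rw [Finset.length_sort] at h₁
  exact ⟨k₁ + k₂, by unfold aF bF; omega⟩

lemma dF_le_dF_add_one_of_hexClose {S T : Finset ℕ} (t : ℕ)
    (hab : HexClose (aF S, bF S) (aF T, bF T)) (hcard : S.card ≤ T.card + 2) :
    dF S t ≤ dF T t + 1 := by
  obtain ⟨c, hc⟩ := exists_card_eq S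
  obtain ⟨c', hc'⟩ := exists_card_eq T
  unfold HexClose at hab
  unfold dF kF cF
  rw [hc, hc'] at hcard ⊢
  split_ifs <;> omega

section InterIcc

variable (Δ : Finset ℕ) {k n : ℕ}

lemma inter_Icc_subset_insert : Δ ∩ Finset.Icc k n ⊆ insert k (Δ ∩ Finset.Icc (k + 1) n) := by
  intro x hx
  simp only [Finset.mem_insert, Finset.mem_inter, Finset.mem_Icc] at hx ⊢
  by_cases hxk : x = k
  · exact Or.inl hxk
  · exact Or.inr ⟨hx.1, by omega, hx.2.2⟩

lemma card_inter_Icc_le : (Δ ∩ Finset.Icc k n).card ≤ (Δ ∩ Finset.Icc (k + 1) n).card + 1 :=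
  (Finset.card_le_card (inter_Icc_subset_insert Δ)).trans (Finset.card_insert_le _ _)

variable {Δ}

lemma inter_Icc_eq_of_notMem (hk : k ∉ Δ) : Δ ∩ Finset.Icc k n = Δ ∩ Finset.Icc (k + 1) n := by
  ext x
  simp only [Finset.mem_inter, Finset.mem_Icc]
  constructor
  · rintro ⟨hx, hkx, hxn⟩
    exact ⟨hx, Nat.lt_of_le_of_ne hkx (fun h => hk (h ▸ hx)), hxn⟩
  · rintro ⟨hx, hkx, hxn⟩
    exact ⟨hx, by omega, hxn⟩

lemma sort_inter_Icc_of_mem (hk : k ∈ Δ) (hkn : k ≤ n) :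
    (Δ ∩ Finset.Icc k n).sort (· ≤ ·) = k :: (Δ ∩ Finset.Icc (k + 1) n).sort (· ≤ ·) := by
  have hins : Δ ∩ Finset.Icc k n = insert k (Δ ∩ Finset.Icc (k + 1) n) := by
    refine (inter_Icc_subset_insert Δ).antisymm (Finset.insert_subset ?_ ?_)
    · simp [hk, hkn]
    · exact Finset.inter_subset_inter_left (Finset.Icc_subset_Icc_left (Nat.le_succ k))
  rw [hins, Finset.sort_insert]
  · intro b hb
    simp only [Finset.mem_inter, Finset.mem_Icc] at hb
    omega
  · simp

end InterIcc

lemma sort_eq_one_cons {n : ℕ} {Δ : Finset ℕ} (hsub : Δ ⊆ Finset.Icc 1 n) (h1 : 1 ∈ Δ) :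
    Δ.sort (· ≤ ·) = 1 :: (Δ ∩ Finset.Icc 3 n).sort (· ≤ ·) ∨
      Δ.sort (· ≤ ·) = 1 :: 2 :: (Δ ∩ Finset.Icc 3 n).sort (· ≤ ·) := by
  have hsort : Δ.sort (· ≤ ·) = 1 :: (Δ ∩ Finset.Icc 2 n).sort (· ≤ ·) := by
    conv_lhs => rw [← Finset.inter_eq_left.mpr hsub]
    exact sort_inter_Icc_of_mem h1 (Finset.mem_Icc.mp (hsub h1)).2
  by_cases h2 : 2 ∈ Δ
  · right
    rw [hsort, sort_inter_Icc_of_mem h2 (Finset.mem_Icc.mp (hsub h2)).2]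
  · left
    rw [hsort, inter_Icc_eq_of_notMem h2]

lemma card_le_card_inter_Icc_three_add_two {n : ℕ} {Δ : Finset ℕ} (hsub : Δ ⊆ Finset.Icc 1 n) :
    Δ.card ≤ (Δ ∩ Finset.Icc 3 n).card + 2 := by
  have h₁ : (Δ ∩ Finset.Icc 1 n).card ≤ (Δ ∩ Finset.Icc 2 n).card + 1 := card_inter_Icc_le Δ
  have h₂ : (Δ ∩ Finset.Icc 2 n).card ≤ (Δ ∩ Finset.Icc 3 n).card + 1 := card_inter_Icc_le Δ
  rw [Finset.inter_eq_left.mpr hsub] at h₁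
  omega

theorem d_gamma2 {n : ℕ} (Δ : Finset ℕ) (hsub : Δ ⊆ Finset.Icc 1 n) (h1 : 1 ∈ Δ) :
    ∀ t, 1 ≤ t → dF Δ t ≤ dF (Δ ∩ Finset.Icc 3 n) t + 1 := by
  intro t _
  refine dF_le_dF_add_one_of_hexClose t ?_ (card_le_card_inter_Icc_three_add_two hsub)
  show HexClose (go (blockData _) 0 0 none) (go (blockData _) 0 0 none)
  rcases sort_eq_one_cons hsub h1 with h | h <;> rw [h]
  · exact hexClose_go_blockData_cons 1 _
  · exact hexClose_go_blockData_cons_succ 1 _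
end

section
/- Let Δ ⊆ [n] with 1 ∈ Δ, whose first maximal block δ_1 satisfies |δ_1| ≥ 3, and let Γ_3 = Δ ∩ [4,n]. Then a(Δ) = a(Γ_3), b(Δ) = b(Γ_3), and c(Δ) = c(Γ_3) + 1. -/
lemma go_fst_irrel (m m' mx ty : ℕ) (L : List (ℕ × ℕ × ℕ)) :
    go ((m, mx, ty) :: L) 0 0 none = go ((m', mx, ty) :: L) 0 0 none := by
  simp [go]

lemma go_zero_block (m mx : ℕ) (L : List (ℕ × ℕ × ℕ)) :
    go ((m, mx, 0) :: L) 0 0 none = go L 0 0 none := by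
  simp [go]

lemma go_bound : ∀ (L : List (ℕ × ℕ × ℕ)) (t s : ℕ) (prev : Option ℕ),
    (go L t s prev).1 + 2 * (go L t s prev).2 ≤ (L.map (fun x => x.2.2)).sum + t + 2 * s
  | [], t, s, prev => by simp [go]; omega
  | (m, mx, ty) :: L, t, s, prev => by
    rw [go]
    simp only [List.map_cons, List.sum_cons]
    split
    · have h := go_bound L 0 0 none
      omega
    · split
      · by_cases h1 : ty = 1
        · subst h1
          norm_num
          have h := go_bound L (t + 1) s (some mx)
          omega
        · by_cases h2 : ty = 2
          · subst h2
            norm_num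
            have h := go_bound L t (s + 1) (some mx)
            omega
          · simp only [if_neg h1, if_neg h2]
            have h := go_bound L (t + 0) (s + 0) (some mx)
            omega
      · by_cases h1 : ty = 1
        · subst h1
          norm_num
          have h := go_bound L 1 0 (some mx)
          omega
        · by_cases h2 : ty = 2
          · subst h2
            norm_num
            have h := go_bound L 0 1 (some mx)
            omega
          · simp only [if_neg h1, if_neg h2]
            have h := go_bound L 0 0 (some mx)
            omega

lemma runs_join : ∀ l : List ℕ, (runs l).flatten = l
  | [] => rfl
  | x :: xs => by
    rw [runs]
    have ih := runs_join xs
    rcases h : runs xs with _ | ⟨_ | ⟨y, ys⟩, rest⟩ <;> rw [h] at ih <;> simp_all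
    split <;> simp_all

lemma runs_cons_s15 (x : ℕ) (xs : List ℕ) : ∃ b rest, runs (x :: xs) = (x :: b) :: rest := by
  rw [runs]
  rcases h : runs xs with _ | ⟨_ | ⟨y, ys⟩, rest⟩
  · exact ⟨[], [], rfl⟩
  · exact ⟨[], _, rfl⟩
  · by_cases hg : x + 1 = y
    · refine ⟨y :: ys, rest, ?_⟩
      simp [hg]
    · refine ⟨[], (y :: ys) :: rest, ?_⟩
      simp [hg]

lemma blockData_sum_le (l : List ℕ) :
    ((blockData l).map (fun x => x.2.2)).sum ≤ l.length := by
  have h1 : (blockData l).map (fun x => x.2.2) = (runs l).map (fun b => b.length % 3) := by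
    simp [blockData, List.map_map]
  rw [h1]
  calc ((runs l).map (fun b => b.length % 3)).sum
      ≤ ((runs l).map List.length).sum := by
        apply List.sum_le_sum
        intro b _
        exact Nat.mod_le _ _
    _ = l.length := by rw [← List.length_flatten, runs_join]

lemma sort_decomp (Δ Γ : Finset ℕ) (h : Δ.val = 1 ::ₘ 2 ::ₘ 3 ::ₘ Γ.val)
    (hge : ∀ x ∈ Γ, 4 ≤ x) : Δ.sort (· ≤ ·) = 1 :: 2 :: 3 :: Γ.sort (· ≤ ·) := by
  refine (fun hp h1 h2 => List.Perm.eq_of_pairwise' (r := (· ≤ ·)) h1 h2 hp) ?_ ?_ ?_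
  · rw [← Multiset.coe_eq_coe, Finset.sort_eq, h, ← Multiset.cons_coe, ← Multiset.cons_coe,
      ← Multiset.cons_coe, Finset.sort_eq]
  · exact Finset.pairwise_sort _ _
  · have key : ∀ b ∈ Γ.sort (· ≤ ·), 4 ≤ b := fun b hb =>
      hge b (by rwa [Finset.mem_sort] at hb)
    rw [List.pairwise_cons, List.pairwise_cons, List.pairwise_cons]
    refine ⟨?_, ?_, ?_, Finset.pairwise_sort _ _⟩
    · intro b hb
      simp only [List.mem_cons] at hb
      rcases hb with rfl | rfl | hb
      · omega
      · omega
      · have := key b hb; omega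
    · intro b hb
      simp only [List.mem_cons] at hb
      rcases hb with rfl | hb
      · omega
      · have := key b hb; omega
    · intro b hb
      have := key b hb; omega

theorem abc_gamma3_long_first_block {n : ℕ} (Δ : Finset ℕ)
    (hsub : Δ ⊆ Finset.Icc 1 n) (h1 : 1 ∈ Δ) (h2 : 2 ∈ Δ) (h3 : 3 ∈ Δ) :
    aF Δ = aF (Δ ∩ Finset.Icc 4 n) ∧ bF Δ = bF (Δ ∩ Finset.Icc 4 n) ∧
      cF Δ = cF (Δ ∩ Finset.Icc 4 n) + 1 := by
  set Γ := Δ ∩ Finset.Icc 4 n with hΓ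
  have hge : ∀ x ∈ Γ, 4 ≤ x := by
    intro x hx
    rw [hΓ, Finset.mem_inter, Finset.mem_Icc] at hx
    exact hx.2.1
  have hΔeq : Δ = insert 1 (insert 2 (insert 3 Γ)) := by
    ext x
    simp only [Finset.mem_insert, hΓ, Finset.mem_inter, Finset.mem_Icc]
    constructor
    · intro hx
      have hxn := hsub hx
      rw [Finset.mem_Icc] at hxn
      by_cases h4 : 4 ≤ x
      · exact Or.inr (Or.inr (Or.inr ⟨hx, h4, hxn.2⟩))
      · interval_cases x <;> simp_all
    · rintro (rfl | rfl | rfl | ⟨hx, _⟩) <;> assumption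
  have hn1 : (1 : ℕ) ∉ insert 2 (insert 3 Γ) := by
    simp only [Finset.mem_insert]
    push_neg
    exact ⟨by omega, by omega, fun h => by have := hge 1 h; omega⟩
  have hn2 : (2 : ℕ) ∉ insert 3 Γ := by
    simp only [Finset.mem_insert]
    push_neg
    exact ⟨by omega, fun h => by have := hge 2 h; omega⟩
  have hn3 : (3 : ℕ) ∉ Γ := fun h => by have := hge 3 h; omega
  have hval : Δ.val = 1 ::ₘ 2 ::ₘ 3 ::ₘ Γ.val := by
    rw [hΔeq, Finset.insert_val_of_notMem hn1, Finset.insert_val_of_notMem hn2,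
      Finset.insert_val_of_notMem hn3]
  have hcard : Δ.card = Γ.card + 3 := by
    rw [hΔeq, Finset.card_insert_of_notMem hn1, Finset.card_insert_of_notMem hn2,
      Finset.card_insert_of_notMem hn3]
  have hsort : Δ.sort (· ≤ ·) = 1 :: 2 :: 3 :: Γ.sort (· ≤ ·) := sort_decomp Δ Γ hval hge
  -- bound for Γ
  have hub : aF Γ + 2 * bF Γ ≤ Γ.card := by
    have h := go_bound (blockData (Γ.sort (· ≤ ·))) 0 0 none
    have h2 := blockData_sum_le (Γ.sort (· ≤ ·))
    rw [Finset.length_sort] at h2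
    have ha' : aF Γ = (go (blockData (Γ.sort (· ≤ ·))) 0 0 none).1 := rfl
    have hb' : bF Γ = (go (blockData (Γ.sort (· ≤ ·))) 0 0 none).2 := rfl
    omega
  have hgo : go (blockData (Δ.sort (· ≤ ·))) 0 0 none
      = go (blockData (Γ.sort (· ≤ ·))) 0 0 none := by
    rw [hsort]
    rcases hl : Γ.sort (· ≤ ·) with _ | ⟨y, ys⟩
    · rfl
    · obtain ⟨b, rest, hr⟩ := runs_cons_s15 y ys
      by_cases hy : y = 4
      · subst hy
        have e3 : runs (3 :: 4 :: ys) = (3 :: 4 :: b) :: rest := by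
          rw [runs, hr]; rfl
        have e2 : runs (2 :: 3 :: 4 :: ys) = (2 :: 3 :: 4 :: b) :: rest := by
          rw [runs, e3]; rfl
        have e1 : runs (1 :: 2 :: 3 :: 4 :: ys) = (1 :: 2 :: 3 :: 4 :: b) :: rest := by
          rw [runs, e2]; rfl
        have hbd1 : blockData (1 :: 2 :: 3 :: 4 :: ys)
            = (1, ((4 :: b).getLast?).getD 0, (1 :: 2 :: 3 :: 4 :: b).length % 3)
              :: rest.map (fun bl => (bl.headI, (bl.getLast?).getD 0, bl.length % 3)) := by
          rw [blockData, e1]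
          simp only [List.map_cons, List.headI, List.getLast?_cons_cons]
        have hty : (1 :: 2 :: 3 :: 4 :: b).length % 3 = (4 :: b).length % 3 := by
          simp only [List.length_cons]
          omega
        have hbd2 : blockData (4 :: ys)
            = (4, ((4 :: b).getLast?).getD 0, (4 :: b).length % 3)
              :: rest.map (fun bl => (bl.headI, (bl.getLast?).getD 0, bl.length % 3)) := by
          rw [blockData, hr]
          simp only [List.map_cons, List.headI]
        rw [hbd1, hty, hbd2]
        exact go_fst_irrel _ _ _ _ _
      · have hne : ¬ (3 + 1 = y) := by omega
        have e3 : runs (3 :: y :: ys) = [3] :: (y :: b) :: rest := by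
          rw [runs, hr]
          simp [hne]
        have e2 : runs (2 :: 3 :: y :: ys) = [2, 3] :: (y :: b) :: rest := by
          rw [runs, e3]; rfl
        have e1 : runs (1 :: 2 :: 3 :: y :: ys) = [1, 2, 3] :: (y :: b) :: rest := by
          rw [runs, e2]; rfl
        have hbd1 : blockData (1 :: 2 :: 3 :: y :: ys) = (1, 3, 0) :: blockData (y :: ys) := by
          rw [blockData, e1, blockData, hr]
          rfl
        rw [hbd1, go_zero_block]
  have ha : aF Δ = aF Γ := by simp only [aF]; rw [hgo]
  have hb : bF Δ = bF Γ := by simp only [bF]; rw [hgo]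
  refine ⟨ha, hb, ?_⟩
  simp only [cF]
  rw [ha, hb, hcard]
  omega
end
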